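/- Let n ∈ ℕ with n ≥ 1 and k ∈ ℝ with k ≥ 0 and kn − n/2 > −1/2. For every ℓ ∈ ℕ₀ there exist real constants d_{0,ℓ}, …, d_{ℓ,ℓ} with d_{0,ℓ} = 1 (depending only on k, n, ℓ) such that for all x, y ∈ ℝ with xy ≠ 0, the ℓ-th iterate of the Euler operator x ∂/∂x (acting in the variable x) satisfies (x ∂/∂x)^ℓ ( xy · j_{kn+n/2}(n|xy|^{1/n}) ) = Σ_{j=0}^ℓ d_{j,ℓ} |xy|^{2j/n} · xy · j_{kn+n/2+j}(n|xy|^{1/n}). -/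

import Mathlib

open MeasureTheory Real
open scoped ENNReal NNReal

noncomputable section

/-- Euler operator `g ↦ x g'(x)` on real-valued functions. -/
def eulerR (f : ℝ → ℝ) (x : ℝ) : ℝ := x * deriv f x

/-- The normalized Bessel function `j_ν`. -/
def besselJ (ν : ℝ) (z : ℝ) : ℝ :=
  Real.Gamma (ν + 1) *
    ∑' m : ℕ, ((-1 : ℝ) ^ m / ((m.factorial : ℝ) * Real.Gamma (ν + (m : ℝ) + 1))) *
      (z / 2) ^ (2 * m)

/-!
Termwise differentiation of the series gives `j_ν'(z) = -z / (2(ν+1)) · j_{ν+1}(z)`. Hence, for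
`T_j(t) = |t|^{2j/n} · t · j_{ν+j}(n|t|^{1/n})`, the Euler operator acts away from `t = 0` by
`(t ∂_t) T_j = (2j/n + 1) T_j - n / (2(ν+j+1)) · T_{j+1}`, a triangular recursion in which the
coefficient of `T_0` stays `1`. The function in the theorem is `t ↦ T_0(ty)` with `ν = kn + n/2`,
and the Euler operator commutes with the dilation `t ↦ ty`.
-/

open Finset Filter Topology
open scoped Nat

theorem hasDerivAt_tsum_mul_pow {c : ℕ → ℝ} {C : ℝ} (hc : ∀ m, |c m| ≤ C / m !) (w : ℝ) :
    HasDerivAt (fun w => ∑' m, c m * w ^ m) (∑' m, (m + 1) * c (m + 1) * w ^ m) w := by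
  set R := |w| + 1
  have hR : 1 ≤ R := by simp [R]
  have hw : w ∈ Metric.ball (0 : ℝ) R := by simp [R]
  have hu : Summable fun m : ℕ => C * ((2 * R) ^ m / m !) :=
    (Real.summable_pow_div_factorial _).mul_left C
  have hbound : ∀ (m : ℕ) (y : ℝ), |y| ≤ R →
      ‖c m * (m * y ^ (m - 1))‖ ≤ C * ((2 * R) ^ m / m !) := by
    intro m y hy
    have hm : (m : ℝ) ≤ 2 ^ m := by exact_mod_cast (Nat.lt_two_pow_self).le
    have hy' : |y| ^ (m - 1) ≤ R ^ m :=
      (pow_le_pow_left₀ (abs_nonneg y) hy _).trans (pow_le_pow_right₀ hR (Nat.sub_le m 1))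
    calc ‖c m * (m * y ^ (m - 1))‖ = |c m| * (m * |y| ^ (m - 1)) := by simp
      _ ≤ C / m ! * (2 ^ m * R ^ m) :=
          mul_le_mul (hc m) (by gcongr) (by positivity) ((abs_nonneg _).trans (hc m))
      _ = C * ((2 * R) ^ m / m !) := by rw [mul_pow]; ring
  have hsum : Summable fun m => c m * w ^ m := by
    refine .of_norm_bounded ((Real.summable_pow_div_factorial R).mul_left C) fun m => ?_
    calc ‖c m * w ^ m‖ = |c m| * |w| ^ m := by simp
      _ ≤ C / m ! * R ^ m :=
          mul_le_mul (hc m) (by gcongr; simp [R]) (by positivity) ((abs_nonneg _).trans (hc m))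
      _ = C * (R ^ m / m !) := by ring
  have hderiv := hasDerivAt_tsum_of_isPreconnected hu Metric.isOpen_ball
    (convex_ball (0 : ℝ) R).isPreconnected (fun m y _ => (hasDerivAt_pow m y).const_mul (c m))
    (fun m y hy => hbound m y (by simpa using (Metric.mem_ball.1 hy).le)) hw hsum hw
  have hsum' : Summable fun m => c m * (m * w ^ (m - 1)) :=
    .of_norm_bounded hu fun m => hbound m w (by simp [R])
  have hshift : ∑' m, c m * (m * w ^ (m - 1)) = ∑' m, (m + 1) * c (m + 1) * w ^ m := by
    rw [hsum'.tsum_eq_zero_add]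
    simp only [CharP.cast_eq_zero, zero_mul, mul_zero, zero_add, Nat.cast_add, Nat.cast_one,
      add_tsub_cancel_right]
    congr 1 with m
    ring
  rwa [hshift] at hderiv

def besselCoeff (ν : ℝ) (m : ℕ) : ℝ := (-1) ^ m / (m ! * Gamma (ν + m + 1))

def besselSeries (ν w : ℝ) : ℝ := ∑' m, besselCoeff ν m * w ^ m

theorem besselJ_eq_besselSeries (ν z : ℝ) :
    besselJ ν z = Gamma (ν + 1) * besselSeries ν ((z / 2) ^ 2) := by
  simp only [besselJ, besselSeries, besselCoeff, ← pow_mul]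

section

variable {ν : ℝ} (hν : 0 ≤ ν)
include hν

theorem Gamma_add_succ_add_one (m : ℕ) :
    Gamma (ν + ↑(m + 1) + 1) = (ν + m + 1) * Gamma (ν + m + 1) := by
  rw [← Gamma_add_one (by positivity)]; push_cast; ring_nf

theorem Gamma_add_one_mul_factorial_le (m : ℕ) : Gamma (ν + 1) * m ! ≤ Gamma (ν + m + 1) := by
  induction m with
  | zero => simp
  | succ m ih =>
    rw [Gamma_add_succ_add_one hν, Nat.factorial_succ, Nat.cast_mul, mul_left_comm]
    exact mul_le_mul (by push_cast; linarith) ih (by positivity)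
      (by have := Gamma_pos_of_pos (by positivity : 0 < ν + m + 1); positivity)

theorem abs_besselCoeff_le (m : ℕ) : |besselCoeff ν m| ≤ (Gamma (ν + 1))⁻¹ / m ! := by
  have hΓ : 0 < Gamma (ν + 1) := Gamma_pos_of_pos (by positivity)
  have hm : (1 : ℝ) ≤ m ! := by exact_mod_cast m.factorial_pos
  rw [besselCoeff, abs_div, abs_pow, abs_neg, abs_one, one_pow,
    abs_of_pos (by positivity), inv_div_left, one_div]
  gcongr
  exact (le_mul_of_one_le_right hΓ.le hm).trans (Gamma_add_one_mul_factorial_le hν m)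

theorem succ_mul_besselCoeff_succ (m : ℕ) :
    (m + 1) * besselCoeff ν (m + 1) = -besselCoeff (ν + 1) m := by
  have hΓ : 0 < Gamma (ν + m + 1) := Gamma_pos_of_pos (by positivity)
  rw [besselCoeff, besselCoeff, Gamma_add_succ_add_one hν, Nat.factorial_succ, pow_succ,
    show ν + 1 + m + 1 = (ν + m + 1) + 1 by ring, Gamma_add_one (s := ν + m + 1) (by positivity)]
  push_cast
  field_simp

theorem hasDerivAt_besselSeries (w : ℝ) :
    HasDerivAt (besselSeries ν) (-besselSeries (ν + 1) w) w := by
  have h := hasDerivAt_tsum_mul_pow (abs_besselCoeff_le hν) w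
  simp only [succ_mul_besselCoeff_succ hν, neg_mul, tsum_neg] at h
  exact h

theorem hasDerivAt_besselJ (z : ℝ) :
    HasDerivAt (besselJ ν) (-(z / (2 * (ν + 1))) * besselJ (ν + 1) z) z := by
  have hsq : HasDerivAt (fun z : ℝ => (z / 2) ^ 2) (z / 2) z :=
    (((hasDerivAt_id z).div_const 2).fun_pow 2).congr_deriv (by simp; ring)
  have h := ((hasDerivAt_besselSeries hν _).comp z hsq).const_mul (Gamma (ν + 1))
  rw [funext (besselJ_eq_besselSeries ν)]
  refine h.congr_deriv ?_
  rw [besselJ_eq_besselSeries, Gamma_add_one (s := ν + 1) (by positivity)]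
  field_simp

end

theorem eulerR_comp_mul_right (f : ℝ → ℝ) (y : ℝ) :
    eulerR (fun t => f (t * y)) = fun t => eulerR f (t * y) := by
  funext t
  simp only [eulerR, mul_comm _ y, deriv_comp_mul_left y f t, smul_eq_mul]
  ring

theorem eulerR_iterate_comp_mul_right (f : ℝ → ℝ) (y : ℝ) (ℓ : ℕ) :
    eulerR^[ℓ] (fun t => f (t * y)) = fun t => eulerR^[ℓ] f (t * y) := by
  induction ℓ generalizing f with
  | zero => rfl
  | succ ℓ ih => simp only [Function.iterate_succ_apply, eulerR_comp_mul_right, ih]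

theorem Filter.EventuallyEq.eulerR_eq {f g : ℝ → ℝ} {t : ℝ} (h : f =ᶠ[𝓝 t] g) :
    eulerR f t = eulerR g t := by
  rw [eulerR, eulerR, h.deriv_eq]

theorem eulerR_sum {ι : Type*} (s : Finset ι) (d : ι → ℝ) {T : ι → ℝ → ℝ} {t : ℝ}
    (hT : ∀ i ∈ s, DifferentiableAt ℝ (T i) t) :
    eulerR (fun u => ∑ i ∈ s, d i * T i u) t = ∑ i ∈ s, d i * eulerR (T i) t := by
  rw [eulerR, deriv_fun_sum fun i hi => (hT i hi).const_mul (d i), mul_sum]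
  refine sum_congr rfl fun i hi => ?_
  rw [deriv_const_mul _ (hT i hi), eulerR]
  ring

theorem hasDerivAt_abs_rpow_of_ne_zero (a : ℝ) {t : ℝ} (ht : t ≠ 0) :
    HasDerivAt (fun s => |s| ^ a) (a * |t| ^ a / t) t := by
  refine ((hasDerivAt_abs ht).rpow_const (Or.inl (abs_ne_zero.2 ht))).congr_deriv ?_
  rw [rpow_sub_one (abs_ne_zero.2 ht)]
  rcases ht.lt_or_gt with h | h <;> simp [h, abs_of_neg, abs_of_pos] <;> field_simp

def besselTerm (ν r : ℝ) (j : ℕ) (t : ℝ) : ℝ :=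
  |t| ^ (2 * (j : ℝ) / r) * t * besselJ (ν + j) (r * |t| ^ (1 / r))

section

variable {ν r : ℝ} (hν : 0 ≤ ν) (hr : 0 < r)
include hν hr

theorem hasDerivAt_besselTerm (j : ℕ) {t : ℝ} (ht : t ≠ 0) :
    HasDerivAt (besselTerm ν r j)
      (((2 * j / r + 1) * besselTerm ν r j t
        - r / (2 * (ν + j + 1)) * besselTerm ν r (j + 1) t) / t) t := by
  have hJ := (hasDerivAt_besselJ (by positivity : 0 ≤ ν + j) _).comp t
    ((hasDerivAt_abs_rpow_of_ne_zero (1 / r) ht).const_mul r)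
  have h := ((hasDerivAt_abs_rpow_of_ne_zero (2 * j / r) ht).mul (hasDerivAt_id t)).mul hJ
  refine h.congr_deriv ?_
  have hsplit :
      |t| ^ (2 * ((j : ℝ) + 1) / r) = |t| ^ (2 * (j : ℝ) / r) * (|t| ^ (1 / r)) ^ 2 := by
    rw [← rpow_natCast, ← rpow_mul (abs_nonneg t), ← rpow_add (abs_pos.2 ht)]
    congr 1
    push_cast
    ring
  have hd : ν + (j : ℝ) + 1 ≠ 0 := by positivity
  simp only [besselTerm, Function.comp_apply, Pi.mul_apply, id, Nat.cast_add, Nat.cast_one,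
    ← add_assoc, hsplit]
  field_simp
  ring

theorem eulerR_besselTerm (j : ℕ) {t : ℝ} (ht : t ≠ 0) :
    eulerR (besselTerm ν r j) t =
      (2 * j / r + 1) * besselTerm ν r j t
        - r / (2 * (ν + j + 1)) * besselTerm ν r (j + 1) t := by
  rw [eulerR, (hasDerivAt_besselTerm hν hr j ht).deriv]
  field_simp

end

/-- `besselEulerCoeff ν r ℓ j` is `d_{j,ℓ}`; the recursion transcribes `eulerR_besselTerm`. -/
def besselEulerCoeff (ν r : ℝ) : ℕ → ℕ → ℝ
  | 0, j => if j = 0 then 1 else 0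
  | ℓ + 1, 0 => besselEulerCoeff ν r ℓ 0
  | ℓ + 1, j + 1 => (2 * ((j + 1 : ℕ) : ℝ) / r + 1) * besselEulerCoeff ν r ℓ (j + 1)
      - r / (2 * (ν + j + 1)) * besselEulerCoeff ν r ℓ j

theorem besselEulerCoeff_zero_right (ν r : ℝ) (ℓ : ℕ) : besselEulerCoeff ν r ℓ 0 = 1 := by
  induction ℓ with
  | zero => rfl
  | succ ℓ ih => rwa [besselEulerCoeff]

theorem besselEulerCoeff_eq_zero_of_lt (ν r : ℝ) {ℓ j : ℕ} (h : ℓ < j) :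
    besselEulerCoeff ν r ℓ j = 0 := by
  induction ℓ generalizing j with
  | zero => simp [besselEulerCoeff, h.ne']
  | succ ℓ ih =>
    obtain ⟨j, rfl⟩ := Nat.exists_eq_add_one_of_ne_zero (by omega : j ≠ 0)
    rw [besselEulerCoeff, ih (by omega), ih (by omega)]
    ring

theorem sum_besselEulerCoeff_succ (ν r : ℝ) (ℓ : ℕ) (T : ℕ → ℝ) :
    ∑ j ∈ range (ℓ + 1), besselEulerCoeff ν r ℓ j *
        ((2 * j / r + 1) * T j - r / (2 * (ν + j + 1)) * T (j + 1)) =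
      ∑ j ∈ range (ℓ + 2), besselEulerCoeff ν r (ℓ + 1) j * T j := by
  have hdiag : ∑ j ∈ range (ℓ + 1), besselEulerCoeff ν r ℓ j * ((2 * j / r + 1) * T j) =
      ∑ j ∈ range (ℓ + 1),
        besselEulerCoeff ν r ℓ (j + 1) * ((2 * ((j + 1 : ℕ) : ℝ) / r + 1) * T (j + 1)) +
      besselEulerCoeff ν r ℓ 0 * T 0 := by
    rw [← add_zero (∑ j ∈ range (ℓ + 1), _),
      ← mul_eq_zero_of_left (besselEulerCoeff_eq_zero_of_lt ν r (Nat.lt_succ_self ℓ))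
        ((2 * ((ℓ + 1 : ℕ) : ℝ) / r + 1) * T (ℓ + 1)),
      ← sum_range_succ (fun j => besselEulerCoeff ν r ℓ j * ((2 * j / r + 1) * T j)),
      sum_range_succ']
    simp
  conv_rhs => rw [sum_range_succ']
  simp only [besselEulerCoeff, mul_sub, sum_sub_distrib, hdiag, sub_mul]
  rw [add_sub_right_comm]
  congr 2 <;> exact sum_congr rfl fun _ _ => by ring

theorem eulerR_iterate_besselTerm {ν r : ℝ} (hν : 0 ≤ ν) (hr : 0 < r) (ℓ : ℕ) {t : ℝ}
    (ht : t ≠ 0) :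
    eulerR^[ℓ] (besselTerm ν r 0) t =
      ∑ j ∈ range (ℓ + 1), besselEulerCoeff ν r ℓ j * besselTerm ν r j t := by
  induction ℓ generalizing t with
  | zero => simp [besselEulerCoeff]
  | succ ℓ ih =>
    have hloc : eulerR^[ℓ] (besselTerm ν r 0) =ᶠ[𝓝 t]
        fun s => ∑ j ∈ range (ℓ + 1), besselEulerCoeff ν r ℓ j * besselTerm ν r j s := by
      filter_upwards [eventually_ne_nhds ht] with s hs using ih hs
    rw [Function.iterate_succ_apply', hloc.eulerR_eq,
      eulerR_sum _ _ fun j _ => (hasDerivAt_besselTerm hν hr j ht).differentiableAt]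
    simp only [eulerR_besselTerm hν hr _ ht]
    exact sum_besselEulerCoeff_succ ν r ℓ _

theorem euler_iterate_besselJ_odd_general (n : ℕ) (hn : 1 ≤ n) (k : ℝ) (hk : 0 ≤ k) (ℓ : ℕ) :
    ∃ d : ℕ → ℝ, d 0 = 1 ∧ ∀ x y : ℝ, x * y ≠ 0 →
      (eulerR)^[ℓ]
          (fun t : ℝ =>
            t * y * besselJ (k * n + (n : ℝ) / 2) ((n : ℝ) * |t * y| ^ (1 / (n : ℝ)))) x =
        ∑ j ∈ Finset.range (ℓ + 1), d j * |x * y| ^ (2 * (j : ℝ) / (n : ℝ)) * (x * y) *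
          besselJ (k * n + (n : ℝ) / 2 + j) ((n : ℝ) * |x * y| ^ (1 / (n : ℝ))) := by
  have hν : 0 ≤ k * n + (n : ℝ) / 2 := by positivity
  have hr : (0 : ℝ) < n := by exact_mod_cast hn
  refine ⟨besselEulerCoeff (k * n + n / 2) n ℓ, besselEulerCoeff_zero_right _ _ ℓ,
    fun x y hxy => ?_⟩
  have hfun :
      (fun t : ℝ => t * y * besselJ (k * n + (n : ℝ) / 2) ((n : ℝ) * |t * y| ^ (1 / (n : ℝ)))) =
        fun t => besselTerm (k * n + (n : ℝ) / 2) n 0 (t * y) := by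
    funext t
    simp [besselTerm]
  rw [hfun, congrFun (eulerR_iterate_comp_mul_right _ y ℓ) x,
    eulerR_iterate_besselTerm hν hr ℓ hxy]
  refine sum_congr rfl fun j _ => ?_
  rw [besselTerm]
  ring

/-- Iterates of the Euler operator applied to `xy j_{kn+n/2}(n|xy|^{1/n})` (in `x`) are
linear combinations `Σ_{j=0}^ℓ d_{j,ℓ} |xy|^{2j/n} xy j_{kn+n/2+j}(n|xy|^{1/n})` with
`d_{0,ℓ} = 1`. -/
theorem euler_iterate_besselJ_odd (n : ℕ) (hn : 1 ≤ n) (k : ℝ) (hk : 0 ≤ k)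
    (hkn : k * n - (n : ℝ) / 2 > -(1 / 2)) (ℓ : ℕ) :
    ∃ d : ℕ → ℝ, d 0 = 1 ∧ ∀ x y : ℝ, x * y ≠ 0 →
      (eulerR)^[ℓ]
          (fun t : ℝ =>
            t * y * besselJ (k * n + (n : ℝ) / 2) ((n : ℝ) * |t * y| ^ (1 / (n : ℝ)))) x =
        ∑ j ∈ Finset.range (ℓ + 1), d j * |x * y| ^ (2 * (j : ℝ) / (n : ℝ)) * (x * y) *
          besselJ (k * n + (n : ℝ) / 2 + j) ((n : ℝ) * |x * y| ^ (1 / (n : ℝ))) :=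
  euler_iterate_besselJ_odd_general n hn k hk ℓ

end
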